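/- Let φ be ReLU applied coordinatewise, W a real matrix, and x ∈ ℝⁿ a fixed input, and define the scale-offset parameterized function F(σ, μ) = f_RMS(φ(W(σ ⊙ x + μ))), where f_RMS(v) = v/‖v‖ and σ ⊙ x is the coordinatewise product. Suppose F, as a function of the joint parameter (σ, μ) ∈ ℝⁿ × ℝⁿ, is differentiable at the points considered, and let c > 0. Then a gradient step of size η_c = c² taken at the rescaled parameters (cσ, cμ) produces the same function output as a gradient step of size 1 taken at (σ, μ): writing g = ∇_{(σ,μ)} Φ for any differentiable real-valued function Φ factoring through F, one has F((cσ, cμ) + c² ∇Φ(cσ, cμ)) = F((σ, μ) + ∇Φ(σ, μ)). -/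

import Mathlib

/-- RMS normalization of a vector in `ℝⁿ` (Euclidean norm): `v ↦ v/‖v‖`. -/
noncomputable def rms {m : ℕ} (v : Fin m → ℝ) : Fin m → ℝ :=
  (Real.sqrt (∑ i, v i ^ 2))⁻¹ • v

/-- The scale-offset parameterized layer `F(σ, μ) = f_RMS(ReLU(W(σ ⊙ x + μ)))`, with
the joint parameter `(σ, μ)` encoded as a single Euclidean vector `p` indexed by
`Fin n ⊕ Fin n` (the `inl` block is `σ`, the `inr` block is `μ`). -/
noncomputable def scaleOffsetLayer (m n : ℕ) (W : Fin m → Fin n → ℝ) (x : Fin n → ℝ)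
    (p : EuclideanSpace ℝ (Fin n ⊕ Fin n)) : Fin m → ℝ :=
  rms (fun i => max (∑ j, W i j * (p (Sum.inl j) * x j + p (Sum.inr j))) 0)

lemma rms_smul {m : ℕ} (v : Fin m → ℝ) {c : ℝ} (hc : 0 < c) : rms (c • v) = rms v := by
  unfold rms
  have h1 : (∑ i, (c • v) i ^ 2) = c ^ 2 * ∑ i, v i ^ 2 := by
    simp [Finset.mul_sum, mul_pow]
  rw [h1, Real.sqrt_mul (sq_nonneg c), Real.sqrt_sq hc.le, smul_smul, mul_inv,
    mul_comm c⁻¹, mul_assoc, inv_mul_cancel₀ hc.ne', mul_one]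

lemma layer_smul (m n : ℕ) (W : Fin m → Fin n → ℝ) (x : Fin n → ℝ)
    (q : EuclideanSpace ℝ (Fin n ⊕ Fin n)) {c : ℝ} (hc : 0 < c) :
    scaleOffsetLayer m n W x (c • q) = scaleOffsetLayer m n W x q := by
  unfold scaleOffsetLayer
  have h1 : (fun i => max (∑ j, W i j * ((c • q) (Sum.inl j) * x j + (c • q) (Sum.inr j))) 0)
      = c • fun i => max (∑ j, W i j * (q (Sum.inl j) * x j + q (Sum.inr j))) 0 := by
    funext i
    simp only [PiLp.smul_apply, smul_eq_mul, Pi.smul_apply]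
    rw [mul_max_of_nonneg _ _ hc.le, mul_zero, Finset.mul_sum]
    congr 1
    apply Finset.sum_congr rfl
    intro j _
    ring
  rw [h1, rms_smul _ hc]

lemma grad_scale {E : Type*} [NormedAddCommGroup E] [InnerProductSpace ℝ E] [CompleteSpace E]
    (Φ : E → ℝ) {c : ℝ} (hc : c ≠ 0) (hinv : ∀ q, Φ (c • q) = Φ q)
    (p : E) (hp : DifferentiableAt ℝ Φ p) (hcp : DifferentiableAt ℝ Φ (c • p)) :
    gradient Φ (c • p) = c⁻¹ • gradient Φ p := by
  set L : E →L[ℝ] E := c • ContinuousLinearMap.id ℝ E with hL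
  have hLapp : ∀ q, L q = c • q := fun q => rfl
  have hΦL : Φ ∘ L = Φ := funext fun q => hinv q
  have hcomp : fderiv ℝ (Φ ∘ L) p = (fderiv ℝ Φ (L p)).comp (fderiv ℝ L p) :=
    fderiv_comp p (by simpa [hLapp] using hcp) L.differentiableAt
  rw [hΦL, L.fderiv] at hcomp
  have hf : fderiv ℝ Φ (c • p) = c⁻¹ • fderiv ℝ Φ p := by
    ext v
    rw [hcomp]
    simp only [ContinuousLinearMap.smul_apply, ContinuousLinearMap.coe_comp', Function.comp_apply,
      hLapp, map_smul, smul_eq_mul]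
    field_simp
  unfold gradient
  rw [hf, map_smul]

/-- Let `F(σ, μ) = f_RMS(ReLU(W(σ ⊙ x + μ)))` as a function of the joint
parameter `p = (σ, μ)`, and let `Φ` be any real-valued function factoring through `F`
(`Φ = G ∘ F`) that is differentiable at the points considered. For `c > 0`, a gradient
step of size `η_c = c²` taken at the rescaled parameters `c·p = (cσ, cμ)` produces the
same function output as a gradient step of size `1` at `p = (σ, μ)`:
`F(c·p + c²∇Φ(c·p)) = F(p + ∇Φ(p))`. -/
theorem stmt14 (m n : ℕ) (W : Fin m → Fin n → ℝ) (x : Fin n → ℝ)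
    (Φ : EuclideanSpace ℝ (Fin n ⊕ Fin n) → ℝ)
    (hfac : ∃ G : (Fin m → ℝ) → ℝ, ∀ q, Φ q = G (scaleOffsetLayer m n W x q))
    (p : EuclideanSpace ℝ (Fin n ⊕ Fin n)) (c : ℝ) (hc : 0 < c)
    (hΦp : DifferentiableAt ℝ Φ p) (hΦcp : DifferentiableAt ℝ Φ (c • p)) :
    scaleOffsetLayer m n W x (c • p + (c ^ 2) • gradient Φ (c • p))
      = scaleOffsetLayer m n W x (p + gradient Φ p) := by
  obtain ⟨G, hG⟩ := hfac
  have hinv : ∀ q, Φ (c • q) = Φ q := fun q => by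
    rw [hG, hG, layer_smul _ _ _ _ _ hc]
  have hgrad := grad_scale Φ hc.ne' hinv p hΦp hΦcp
  rw [hgrad, smul_smul]
  have : c ^ 2 * c⁻¹ = c := by field_simp
  rw [this, ← smul_add, layer_smul _ _ _ _ _ hc]
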